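/- For nonnegative integers $a$, $n$, $s$ with $s \le n$, one has $\sum_{r=0}^{n-s} (-1)^r \binom{a+r}{2n-s} \binom{n-s}{r} = (-1)^{n-s} \binom{a}{n}$. -/

import Mathlib

open Finset fwdDiff

/-- The left side is `(-1)^m` times the `m`-th forward difference of `x ↦ x.choose (n + m)` at `a`,
which is `a.choose n` by Pascal's rule. -/
theorem sum_range_neg_one_pow_mul_choose_add_mul_choose (a n m : ℕ) :
    ∑ r ∈ range (m + 1), (-1 : ℤ) ^ r * ((a + r).choose (n + m)) * (m.choose r)
      = (-1 : ℤ) ^ m * a.choose n := by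
  have hdiff : Δ_[1] ^[m] (fun x ↦ x.choose (m + n) : ℕ → ℤ) a = a.choose n :=
    congrFun (fwdDiff_iter_choose n m) a
  rw [← hdiff, fwdDiff_iter_eq_sum_shift, mul_sum]
  refine sum_congr rfl fun r hr ↦ ?_
  have hsign : (-1 : ℤ) ^ r = (-1) ^ m * (-1) ^ (m - r) := by
    rw [← pow_add, show m + (m - r) = r + 2 * (m - r) by grind, pow_add,
      pow_mul, neg_one_sq, one_pow, mul_one]
  simp only [smul_eq_mul, mul_one, hsign, add_comm n m]
  ring

theorem stmt0 (a n s : ℕ) (hs : s ≤ n) :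
    ∑ r ∈ Finset.range (n - s + 1),
      (-1 : ℤ) ^ r * ((a + r).choose (2 * n - s)) * ((n - s).choose r)
    = (-1 : ℤ) ^ (n - s) * a.choose n := by
  rw [show 2 * n - s = n + (n - s) by omega]
  exact sum_range_neg_one_pow_mul_choose_add_mul_choose a n (n - s)
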